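/- (One-step momentum contraction.) Let $f$ be $L$-smooth in Frobenius norm, and let $M_t = \beta M_{t-1} + (1-\beta) G_t$ where $G_t$ is an unbiased estimate of $\nabla f(W_t)$ with variance at most $\sigma^2/b$ (conditionally on the past), $\beta \in [0,1)$, and $\|W_{t-1} - W_t\|_F \le \eta\sqrt{n}$. Then $\mathbb{E}[\|M_t - \nabla f(W_t)\|_F^2] \le \frac{1+\beta}{2}\,\mathbb{E}[\|M_{t-1} - \nabla f(W_{t-1})\|_F^2] + \frac{2L^2\eta^2 n}{1-\beta} + \frac{(1-\beta)^2\sigma^2}{b}$. -/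

import Mathlib

/-! Write `e = M_{t-1} - ∇f(W_{t-1})`, `d = ∇f(W_{t-1}) - ∇f(W_t)` and `ξ = G_t - ∇f(W_t)`, so that
`M_t - ∇f(W_t) = β (e + d) + (1 - β) ξ`. Expanding the square, the cross terms with the noise `ξ`
have mean zero, and Peter–Paul with `ε = (1 - β)/2` splits `β² ‖e + d‖²` into
`(1 + β)/2 ‖e‖² + 2/(1 - β) ‖d‖²`, while smoothness gives `‖d‖² ≤ L² η² n`. The Frobenius
norm and inner product are those of the matrix flattened into Euclidean space. -/

open Matrix MeasureTheory

noncomputable def fnorm {m n : ℕ} (A : Matrix (Fin m) (Fin n) ℝ) : ℝ :=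
  Real.sqrt (Matrix.trace (Aᵀ * A))

def finner {m n : ℕ} (A B : Matrix (Fin m) (Fin n) ℝ) : ℝ :=
  Matrix.trace (Aᵀ * B)

def euclideanFlatten {m n : ℕ} :
    Matrix (Fin m) (Fin n) ℝ →ₗ[ℝ] EuclideanSpace ℝ (Fin m × Fin n) where
  toFun A := WithLp.toLp 2 fun p => A p.1 p.2
  map_add' _ _ := rfl
  map_smul' _ _ := rfl

@[simp]
theorem euclideanFlatten_apply {m n : ℕ} (A : Matrix (Fin m) (Fin n) ℝ) (p : Fin m × Fin n) :
    euclideanFlatten A p = A p.1 p.2 :=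
  rfl

theorem finner_eq_inner {m n : ℕ} (A B : Matrix (Fin m) (Fin n) ℝ) :
    finner A B = inner ℝ (euclideanFlatten A) (euclideanFlatten B) := by
  simp only [finner, trace, diag, mul_apply, transpose_apply, euclideanFlatten_apply,
    PiLp.inner_apply, RCLike.inner_apply, conj_trivial, Fintype.sum_prod_type]
  rw [Finset.sum_comm]
  simp_rw [mul_comm]

theorem fnorm_eq_norm {m n : ℕ} (A : Matrix (Fin m) (Fin n) ℝ) :
    fnorm A = ‖euclideanFlatten A‖ := by
  rw [fnorm, ← finner, finner_eq_inner, real_inner_self_eq_norm_sq, Real.sqrt_sq (norm_nonneg _)]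

theorem finner_add_left {m n : ℕ} (A B C : Matrix (Fin m) (Fin n) ℝ) :
    finner (A + B) C = finner A C + finner B C := by
  simp only [finner, transpose_add, Matrix.add_mul, trace_add]

theorem norm_add_sq_le_of_pos {E : Type*} [NormedAddCommGroup E] [InnerProductSpace ℝ E]
    {ε : ℝ} (hε : 0 < ε) (x y : E) :
    ‖x + y‖ ^ 2 ≤ (1 + ε) * ‖x‖ ^ 2 + (1 + ε⁻¹) * ‖y‖ ^ 2 := by
  have := two_mul_le_add_mul_sq (a := ‖x‖) (b := ‖y‖) hε
  have := real_inner_le_norm x y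
  rw [norm_add_sq_real]
  linarith

theorem sq_mul_one_add_half_sub_le {β : ℝ} (hβ0 : 0 ≤ β) (hβ1 : β < 1) :
    β ^ 2 * (1 + (1 - β) / 2) ≤ (1 + β) / 2 := by
  nlinarith [mul_nonneg (sub_nonneg.2 hβ1.le) (mul_nonneg hβ0 hβ0),
    mul_nonneg hβ0 (sub_nonneg.2 hβ1.le)]

theorem sq_mul_one_add_inv_half_sub_le {β : ℝ} (hβ0 : 0 ≤ β) (hβ1 : β < 1) :
    β ^ 2 * (1 + ((1 - β) / 2)⁻¹) ≤ 2 / (1 - β) := by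
  have h : 0 < 1 - β := sub_pos.2 hβ1
  rw [inv_div, one_add_div h.ne', ← mul_div_assoc, div_le_div_iff_of_pos_right h]
  nlinarith [mul_nonneg (sub_nonneg.2 hβ1.le) (mul_nonneg hβ0 hβ0),
    mul_nonneg hβ0 (sub_nonneg.2 hβ1.le)]

theorem norm_momentum_sq_le {E : Type*} [NormedAddCommGroup E] [InnerProductSpace ℝ E]
    {β : ℝ} (hβ0 : 0 ≤ β) (hβ1 : β < 1) (p q r : E) :
    ‖β • (p + q) + (1 - β) • r‖ ^ 2 ≤ (1 + β) / 2 * ‖p‖ ^ 2 + 2 / (1 - β) * ‖q‖ ^ 2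
      + (1 - β) ^ 2 * ‖r‖ ^ 2 + 2 * β * (1 - β) * inner ℝ (p + q) r := by
  have hε : 0 < (1 - β) / 2 := by linarith
  have hpq := norm_add_sq_le_of_pos hε p q
  have hcoeff₁ := sq_mul_one_add_half_sub_le hβ0 hβ1
  have hcoeff₂ := sq_mul_one_add_inv_half_sub_le hβ0 hβ1
  rw [norm_add_sq_real, norm_smul, norm_smul, real_inner_smul_left, real_inner_smul_right,
    Real.norm_of_nonneg hβ0, Real.norm_of_nonneg (by linarith)]
  linarith [mul_le_mul_of_nonneg_left hpq (sq_nonneg β),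
    mul_le_mul_of_nonneg_right hcoeff₁ (sq_nonneg ‖p‖),
    mul_le_mul_of_nonneg_right hcoeff₂ (sq_nonneg ‖q‖)]

theorem fnorm_momentum_error_sq_le {m n : ℕ} {β C : ℝ} (hβ0 : 0 ≤ β) (hβ1 : β < 1)
    {Mprev G gPrev gCur : Matrix (Fin m) (Fin n) ℝ} (hdrift : fnorm (gPrev - gCur) ^ 2 ≤ C) :
    fnorm (β • Mprev + (1 - β) • G - gCur) ^ 2
      ≤ (1 + β) / 2 * fnorm (Mprev - gPrev) ^ 2 + 2 * C / (1 - β)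
        + (1 - β) ^ 2 * fnorm (G - gCur) ^ 2
        + 2 * β * (1 - β)
          * (finner (Mprev - gPrev) (G - gCur) + finner (gPrev - gCur) (G - gCur)) := by
  have hdecomp : β • Mprev + (1 - β) • G - gCur
      = β • (Mprev - gPrev + (gPrev - gCur)) + (1 - β) • (G - gCur) := by
    module
  have hmomentum := norm_momentum_sq_le hβ0 hβ1 (euclideanFlatten (Mprev - gPrev))
    (euclideanFlatten (gPrev - gCur)) (euclideanFlatten (G - gCur))
  simp only [← map_add, ← map_smul, ← fnorm_eq_norm, ← finner_eq_inner, finner_add_left]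
    at hmomentum
  have hdrift_term : 2 / (1 - β) * fnorm (gPrev - gCur) ^ 2 ≤ 2 * C / (1 - β) := by
    rw [div_mul_eq_mul_div]
    exact div_le_div_of_nonneg_right (by linarith) (sub_pos.2 hβ1).le
  rw [hdecomp]
  linarith

theorem fnorm_sub_sq_le_of_lipschitz {m n : ℕ} {L d : ℝ} (hL : 0 ≤ L)
    {g : Matrix (Fin m) (Fin n) ℝ → Matrix (Fin m) (Fin n) ℝ}
    (hlip : ∀ A B, fnorm (g A - g B) ≤ L * fnorm (A - B)) {A B : Matrix (Fin m) (Fin n) ℝ}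
    (hAB : fnorm (A - B) ≤ d) :
    fnorm (g A - g B) ^ 2 ≤ (L * d) ^ 2 :=
  pow_le_pow_left₀ (Real.sqrt_nonneg _) ((hlip A B).trans (mul_le_mul_of_nonneg_left hAB hL)) 2

theorem integral_le_of_le_add_centered {Ω : Type*} [MeasurableSpace Ω] {μ : Measure Ω}
    [IsProbabilityMeasure μ] {X P N Z : Ω → ℝ} {a c d : ℝ} (hX : ∀ ω, 0 ≤ X ω)
    (hP : Integrable P μ) (hN : Integrable N μ) (hZ : Integrable Z μ) (hZ0 : ∫ ω, Z ω ∂μ = 0)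
    (hle : ∀ ω, X ω ≤ a * P ω + c + d * N ω + Z ω) :
    ∫ ω, X ω ∂μ ≤ a * ∫ ω, P ω ∂μ + c + d * ∫ ω, N ω ∂μ := by
  have hPc : Integrable (fun ω => a * P ω + c) μ := (hP.const_mul a).add (integrable_const c)
  have hPcN : Integrable (fun ω => a * P ω + c + d * N ω) μ := hPc.add (hN.const_mul d)
  calc ∫ ω, X ω ∂μ ≤ ∫ ω, (a * P ω + c + d * N ω + Z ω) ∂μ :=
        integral_mono_of_nonneg (.of_forall hX) (hPcN.add hZ) (.of_forall hle)
    _ = a * ∫ ω, P ω ∂μ + c + d * ∫ ω, N ω ∂μ := by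
        rw [integral_add hPcN hZ, integral_add hPc (hN.const_mul d),
          integral_add (hP.const_mul a) (integrable_const c), integral_const_mul,
          integral_const_mul, integral_const, hZ0]
        simp

theorem stmt_12_general {m n : ℕ} (L η σ2 β : ℝ) (b : ℕ)
    (hL : 0 ≤ L) (hβ0 : 0 ≤ β) (hβ1 : β < 1)
    {Ω : Type*} [MeasurableSpace Ω] (μ : Measure Ω) [IsProbabilityMeasure μ]
    (g : Matrix (Fin m) (Fin n) ℝ → Matrix (Fin m) (Fin n) ℝ)
    (hlip : ∀ A B, fnorm (g A - g B) ≤ L * fnorm (A - B))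
    (Mprev Wprev Wcur G M : Ω → Matrix (Fin m) (Fin n) ℝ)
    (hM : ∀ ω, M ω = β • Mprev ω + (1 - β) • G ω)
    (hdist : ∀ ω, fnorm (Wprev ω - Wcur ω) ≤ η * Real.sqrt n)
    (hint_prev : Integrable (fun ω => fnorm (Mprev ω - g (Wprev ω)) ^ 2) μ)
    (hint_noise : Integrable (fun ω => fnorm (G ω - g (Wcur ω)) ^ 2) μ)
    (hint_cross1 : Integrable (fun ω => finner (Mprev ω - g (Wprev ω)) (G ω - g (Wcur ω))) μ)
    (hint_cross2 : Integrable (fun ω => finner (g (Wprev ω) - g (Wcur ω)) (G ω - g (Wcur ω))) μ)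
    (hvar : ∫ ω, fnorm (G ω - g (Wcur ω)) ^ 2 ∂μ ≤ σ2 / b)
    (hcross1 : ∫ ω, finner (Mprev ω - g (Wprev ω)) (G ω - g (Wcur ω)) ∂μ = 0)
    (hcross2 : ∫ ω, finner (g (Wprev ω) - g (Wcur ω)) (G ω - g (Wcur ω)) ∂μ = 0) :
    ∫ ω, fnorm (M ω - g (Wcur ω)) ^ 2 ∂μ ≤
      (1 + β) / 2 * ∫ ω, fnorm (Mprev ω - g (Wprev ω)) ^ 2 ∂μ
      + 2 * L ^ 2 * η ^ 2 * n / (1 - β) + (1 - β) ^ 2 * σ2 / b := by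
  have hdrift (ω : Ω) : fnorm (g (Wprev ω) - g (Wcur ω)) ^ 2 ≤ L ^ 2 * η ^ 2 * n := by
    simpa only [mul_pow, Real.sq_sqrt n.cast_nonneg, mul_assoc]
      using fnorm_sub_sq_le_of_lipschitz hL hlip (hdist ω)
  have hcross : ∫ ω, 2 * β * (1 - β) * (finner (Mprev ω - g (Wprev ω)) (G ω - g (Wcur ω))
      + finner (g (Wprev ω) - g (Wcur ω)) (G ω - g (Wcur ω))) ∂μ = 0 := by
    rw [integral_const_mul, integral_add hint_cross1 hint_cross2, hcross1, hcross2, add_zero,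
      mul_zero]
  calc ∫ ω, fnorm (M ω - g (Wcur ω)) ^ 2 ∂μ
      ≤ (1 + β) / 2 * ∫ ω, fnorm (Mprev ω - g (Wprev ω)) ^ 2 ∂μ
        + 2 * (L ^ 2 * η ^ 2 * n) / (1 - β)
        + (1 - β) ^ 2 * ∫ ω, fnorm (G ω - g (Wcur ω)) ^ 2 ∂μ :=
      integral_le_of_le_add_centered (fun _ => sq_nonneg _) hint_prev hint_noise
        ((hint_cross1.add hint_cross2).const_mul _) hcross
        fun ω => hM ω ▸ fnorm_momentum_error_sq_le hβ0 hβ1 (hdrift ω)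
    _ ≤ _ := by
      rw [mul_div_assoc _ σ2, show 2 * L ^ 2 * η ^ 2 * n = 2 * (L ^ 2 * η ^ 2 * n) by ring]
      gcongr

/-- One-step momentum contraction. Let `g = ∇f` be `L`-Lipschitz in
Frobenius norm, `M_t = β M_{t-1} + (1-β) G_t` where `G_t` is an unbiased estimate of
`∇f(W_t)` with variance at most `σ²/b` whose noise is uncorrelated with the past
(cross terms vanish in expectation), `β ∈ [0,1)`, and `‖W_{t-1} - W_t‖_F ≤ η√n`. Then
`𝔼‖M_t - ∇f(W_t)‖_F² ≤ (1+β)/2 · 𝔼‖M_{t-1} - ∇f(W_{t-1})‖_F² + 2L²η²n/(1-β) + (1-β)²σ²/b`. -/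
theorem stmt_12 {m n : ℕ} (L η σ2 β : ℝ) (b : ℕ) (hb : 0 < b)
    (hL : 0 ≤ L) (hη : 0 ≤ η) (hβ0 : 0 ≤ β) (hβ1 : β < 1) (hσ : 0 ≤ σ2)
    {Ω : Type*} [MeasurableSpace Ω] (μ : Measure Ω) [IsProbabilityMeasure μ]
    (g : Matrix (Fin m) (Fin n) ℝ → Matrix (Fin m) (Fin n) ℝ)
    (hlip : ∀ A B, fnorm (g A - g B) ≤ L * fnorm (A - B))
    (Mprev Wprev Wcur G M : Ω → Matrix (Fin m) (Fin n) ℝ)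
    (hM : ∀ ω, M ω = β • Mprev ω + (1 - β) • G ω)
    (hdist : ∀ ω, fnorm (Wprev ω - Wcur ω) ≤ η * Real.sqrt n)
    (hint_prev : Integrable (fun ω => fnorm (Mprev ω - g (Wprev ω)) ^ 2) μ)
    (hint_noise : Integrable (fun ω => fnorm (G ω - g (Wcur ω)) ^ 2) μ)
    (hint_cross1 : Integrable (fun ω => finner (Mprev ω - g (Wprev ω)) (G ω - g (Wcur ω))) μ)
    (hint_cross2 : Integrable (fun ω => finner (g (Wprev ω) - g (Wcur ω)) (G ω - g (Wcur ω))) μ)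
    (hint_cross3 : Integrable (fun ω => finner (Mprev ω - g (Wprev ω)) (g (Wprev ω) - g (Wcur ω))) μ)
    (hvar : ∫ ω, fnorm (G ω - g (Wcur ω)) ^ 2 ∂μ ≤ σ2 / b)
    (hcross1 : ∫ ω, finner (Mprev ω - g (Wprev ω)) (G ω - g (Wcur ω)) ∂μ = 0)
    (hcross2 : ∫ ω, finner (g (Wprev ω) - g (Wcur ω)) (G ω - g (Wcur ω)) ∂μ = 0) :
    ∫ ω, fnorm (M ω - g (Wcur ω)) ^ 2 ∂μ ≤
      (1 + β) / 2 * ∫ ω, fnorm (Mprev ω - g (Wprev ω)) ^ 2 ∂μ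
      + 2 * L ^ 2 * η ^ 2 * n / (1 - β) + (1 - β) ^ 2 * σ2 / b :=
  stmt_12_general L η σ2 β b hL hβ0 hβ1 μ g hlip Mprev Wprev Wcur G M hM hdist hint_prev hint_noise
    hint_cross1 hint_cross2 hvar hcross1 hcross2
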